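/- Let E = (C,V,A,w,k) be a weighted ABC election, let c_1,…,c_k be the k candidates selected by SAV labeled in order of selection (non-increasing SAV score), let ℓ ∈ {1,…,k}, and let x = Σ_{v∈V_{c_{k−ℓ+1}}} w(v)/|A_v| be the SAV score of candidate c_{k−ℓ+1}. An ℓ-replacement (C',V',A',w') is successful for SAV (ties broken in favor of the candidates in C') if and only if every c' ∈ C' has SAV score among the new voters at least x, i.e., Σ_{v'∈V' : c'∈A'_{v'}} w'(v')/|A'_{v'}| ≥ x. -/
import Mathlib


open Finset

variable {Cand Voter : Type} [DecidableEq Cand] [DecidableEq Voter]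

/-- The SAV score of candidate `c`: each voter `v` approving `c` contributes `w v / |A v|`. -/
noncomputable def savScore (V : Finset Voter) (A : Voter → Finset Cand) (w : Voter → ℝ) (c : Cand) : ℝ :=
  ∑ v ∈ V.filter fun v => c ∈ A v, w v / (A v).card

/-- `W` is a committee that Satisfaction Approval Voting may select in `(C,V,A,w,k)`:
it consists of `k` candidates with highest SAV score. -/
def IsSAVCommittee (C : Finset Cand) (V : Finset Voter) (A : Voter → Finset Cand)
    (w : Voter → ℝ) (k : ℕ) (W : Finset Cand) : Prop :=
  W ⊆ C ∧ W.card = k ∧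
    ∀ c ∈ W, ∀ c' ∈ C \ W, savScore V A w c' ≤ savScore V A w c

/-- The `ℓ`-replacement `(C',V',A',w')` is successful for SAV on `(C,V,A,w,k)`:
with ties broken in favor of the candidates in `C'`, SAV run on the extended election
selects all candidates of `C'`, i.e. some SAV committee of the extended election contains `C'`. -/
def SAVSuccessful (C : Finset Cand) (V : Finset Voter) (A : Voter → Finset Cand)
    (w : Voter → ℝ) (k : ℕ) (C' : Finset Cand) (V' : Finset Voter)
    (A' : Voter → Finset Cand) (w' : Voter → ℝ) : Prop :=
  ∃ W : Finset Cand,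
    IsSAVCommittee (C ∪ C') (V ∪ V') (fun v => if v ∈ V then A v else A' v)
      (fun v => if v ∈ V then w v else w' v) k W ∧ C' ⊆ W

/-- Let `c 0, …, c (k-1)` be the `k` candidates selected by SAV, labeled in order of selection
(non-increasing SAV score), let `1 ≤ ℓ ≤ k`, and let `x` be the SAV score of the `(k-ℓ+1)`-th
selected candidate. An `ℓ`-replacement `(C',V',A',w')` is successful for SAV if and only if
every `c' ∈ C'` has SAV score among the new voters at least `x`. -/
theorem sav_replacement_successful_iff
    (C : Finset Cand) (V : Finset Voter) (A : Voter → Finset Cand) (w : Voter → ℝ) (k : ℕ)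
    (hA : ∀ v ∈ V, A v ⊆ C) (hw : ∀ v ∈ V, 0 ≤ w v) (hk : k ≤ C.card)
    (c : Fin k → Cand) (hcinj : Function.Injective c) (hcmem : ∀ i, c i ∈ C)
    (hcmono : ∀ i j : Fin k, i ≤ j → savScore V A w (c j) ≤ savScore V A w (c i))
    (hcSAV : IsSAVCommittee C V A w k (Finset.univ.image c))
    (ℓ : ℕ) (hℓ1 : 1 ≤ ℓ) (hℓk : ℓ ≤ k)
    (x : ℝ) (hx : x = savScore V A w (c ⟨k - ℓ, by omega⟩))
    (C' : Finset Cand) (V' : Finset Voter) (A' : Voter → Finset Cand) (w' : Voter → ℝ)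
    (hC'card : C'.card = ℓ) (hCC' : Disjoint C C') (hVV' : Disjoint V V')
    (hA' : ∀ v ∈ V', A' v ⊆ C') (hw' : ∀ v ∈ V', 0 ≤ w' v) :
    SAVSuccessful C V A w k C' V' A' w' ↔
      ∀ c' ∈ C', x ≤ savScore V' A' w' c' := by
  have hk0 : 0 < k := by omega
  have hkl : k - ℓ < k := by omega
  set Ae : Voter → Finset Cand := fun v => if v ∈ V then A v else A' v with hAedef
  set we : Voter → ℝ := fun v => if v ∈ V then w v else w' v with hwedef
  have key : ∀ c0 : Cand, savScore (V ∪ V') Ae we c0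
      = savScore V A w c0 + savScore V' A' w' c0 := by
    intro c0
    have hv' : ∀ v ∈ V', v ∉ V := fun v hv => Finset.disjoint_right.mp hVV' hv
    unfold savScore
    rw [Finset.filter_union, Finset.sum_union (Finset.disjoint_filter_filter hVV')]
    congr 1
    · refine Finset.sum_congr (Finset.filter_congr fun v hv => by simp [Ae, hv]) ?_
      intro v hv
      simp only [Finset.mem_filter] at hv
      simp [Ae, we, hv.1]
    · refine Finset.sum_congr (Finset.filter_congr fun v hv => by simp [Ae, hv' v hv]) ?_
      intro v hv
      simp only [Finset.mem_filter] at hv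
      simp [Ae, we, hv' v hv.1]
  have oldzero : ∀ c0 ∈ C', savScore V A w c0 = 0 := by
    intro c0 hc0
    unfold savScore
    rw [Finset.filter_false_of_mem, Finset.sum_empty]
    intro v hv hmem
    exact Finset.disjoint_left.mp hCC' (hA v hv hmem) hc0
  have newzero : ∀ c0 ∈ C, savScore V' A' w' c0 = 0 := by
    intro c0 hc0
    unfold savScore
    rw [Finset.filter_false_of_mem, Finset.sum_empty]
    intro v hv hmem
    exact Finset.disjoint_left.mp hCC' hc0 (hA' v hv hmem)
  have extold : ∀ c0 ∈ C, savScore (V ∪ V') Ae we c0 = savScore V A w c0 := by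
    intro c0 hc0; rw [key, newzero c0 hc0, add_zero]
  have extnew : ∀ c0 ∈ C', savScore (V ∪ V') Ae we c0 = savScore V' A' w' c0 := by
    intro c0 hc0; rw [key, oldzero c0 hc0, zero_add]
  set f : ℕ → Cand := fun n => c ⟨n % k, Nat.mod_lt n hk0⟩ with hfdef
  have hfeq : ∀ n (hn : n < k), f n = c ⟨n, hn⟩ := by
    intro n hn
    simp [f, Nat.mod_eq_of_lt hn]
  have hfinj : ∀ m < k, ∀ n < k, f m = f n → m = n := by
    intro m hm n hn hmn
    have := hcinj hmn
    rw [Fin.mk.injEq, Nat.mod_eq_of_lt hm, Nat.mod_eq_of_lt hn] at this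
    exact this
  have hfC : ∀ n, f n ∈ C := fun n => hcmem _
  have hfx : ∀ n, n ≤ k - ℓ → x ≤ savScore V A w (f n) := by
    intro n hn
    rw [hfeq n (by omega), hx]
    exact hcmono ⟨n, by omega⟩ ⟨k - ℓ, hkl⟩ hn
  constructor
  · rintro ⟨W, ⟨hWsub, hWcard, hWopt⟩, hC'W⟩ c' hc'
    -- card of W ∩ C is k - ℓ
    have hWC' : W ∩ C' = C' := by
      apply Finset.Subset.antisymm (Finset.inter_subset_right)
      exact Finset.subset_inter hC'W (Finset.Subset.refl _)
    have hWsplit : W = (W ∩ C) ∪ (W ∩ C') := by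
      rw [← Finset.inter_union_distrib_left]
      exact (Finset.inter_eq_left.mpr hWsub).symm
    have hWCcard : (W ∩ C).card = k - ℓ := by
      have hdisj : Disjoint (W ∩ C) (W ∩ C') :=
        hCC'.mono Finset.inter_subset_right Finset.inter_subset_right
      have := Finset.card_union_of_disjoint hdisj
      rw [← hWsplit, hWcard, hWC', hC'card] at this
      omega
    set T : Finset Cand := (Finset.range (k - ℓ + 1)).image f with hTdef
    have hTcard : T.card = k - ℓ + 1 := by
      rw [hTdef, Finset.card_image_of_injOn, Finset.card_range]
      intro m hm n hn hmn
      simp only [Finset.mem_coe, Finset.mem_range] at hm hn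
      exact hfinj m (by omega) n (by omega) hmn
    have hTnotsub : ¬ T ⊆ W ∩ C := by
      intro hsub
      have := Finset.card_le_card hsub
      omega
    obtain ⟨d, hdT, hdWC⟩ := Finset.not_subset.mp hTnotsub
    obtain ⟨n, hn, hdn⟩ := Finset.mem_image.mp hdT
    rw [Finset.mem_range] at hn
    have hdC : d ∈ C := hdn ▸ hfC n
    have hdW : d ∉ W := fun hdW => hdWC (Finset.mem_inter.mpr ⟨hdW, hdC⟩)
    have hle := hWopt c' (hC'W hc') d
      (Finset.mem_sdiff.mpr ⟨Finset.mem_union_left _ hdC, hdW⟩)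
    rw [extold d hdC, extnew c' hc'] at hle
    have hxd : x ≤ savScore V A w d := hdn ▸ hfx n (by omega)
    linarith
  · intro h
    set T0 : Finset Cand := (Finset.range (k - ℓ)).image f with hT0def
    have hT0C : T0 ⊆ C := by
      intro d hd
      obtain ⟨n, _, hdn⟩ := Finset.mem_image.mp hd
      exact hdn ▸ hfC n
    have hT0card : T0.card = k - ℓ := by
      rw [hT0def, Finset.card_image_of_injOn, Finset.card_range]
      intro m hm n hn hmn
      simp only [Finset.mem_coe, Finset.mem_range] at hm hn
      exact hfinj m (by omega) n (by omega) hmn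
    have hdisj : Disjoint C' T0 := hCC'.symm.mono_right hT0C
    refine ⟨C' ∪ T0, ⟨?_, ?_, ?_⟩, Finset.subset_union_left⟩
    · exact Finset.union_subset (Finset.subset_union_right)
        (hT0C.trans Finset.subset_union_left)
    · rw [Finset.card_union_of_disjoint hdisj, hC'card, hT0card]
      omega
    · intro c0 hc0 c1 hc1
      rw [Finset.mem_sdiff] at hc1
      obtain ⟨hc1u, hc1W⟩ := hc1
      have hc1C' : c1 ∉ C' := fun hmem => hc1W (Finset.mem_union_left _ hmem)
      have hc1C : c1 ∈ C := (Finset.mem_union.mp hc1u).resolve_right hc1C'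
      have hc1x : savScore V A w c1 ≤ x := by
        by_cases hc1im : c1 ∈ Finset.univ.image c
        · obtain ⟨j, _, hj⟩ := Finset.mem_image.mp hc1im
          have hjge : k - ℓ ≤ (j : ℕ) := by
            by_contra hlt
            push_neg at hlt
            have : c1 ∈ T0 := Finset.mem_image.mpr
              ⟨(j : ℕ), Finset.mem_range.mpr hlt, by rw [hfeq _ j.isLt]; simpa using hj⟩
            exact hc1W (Finset.mem_union_right _ this)
          rw [← hj, hx]
          exact hcmono ⟨k - ℓ, hkl⟩ j hjge
        · rw [hx]
          exact hcSAV.2.2 (c ⟨k - ℓ, hkl⟩)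
            (Finset.mem_image_of_mem c (Finset.mem_univ _)) c1
            (Finset.mem_sdiff.mpr ⟨hc1C, hc1im⟩)
      have hc0x : x ≤ savScore (V ∪ V') Ae we c0 := by
        rcases Finset.mem_union.mp hc0 with hc0' | hc0T
        · rw [extnew c0 hc0']
          exact h c0 hc0'
        · obtain ⟨n, hn, hc0n⟩ := Finset.mem_image.mp hc0T
          rw [Finset.mem_range] at hn
          rw [extold c0 (hT0C hc0T), ← hc0n]
          exact hfx n (by omega)
      have := extold c1 hc1C
      rw [this] at *
      linarith [extold c1 hc1C]
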